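/- arXiv:1708.09558 — 9 statements merged into one kernel-verified Lean document; each statement's English description precedes it below -/
import Mathlib

section
/- Let X and Y be metric spaces and q, r ≥ 0 real numbers. A map f : X → Y satisfies f '' (c_q A) ⊆ c_r (f '' A) for every A ⊆ X (i.e. f is continuous as a map of closure spaces (X, c_q) → (Y, c_r)) if and only if f is (q,r)-continuous, i.e. for every x ∈ X and every ε > 0 there exists δ > 0 such that for all x' ∈ X, dist x x' < q + δ implies dist (f x) (f x') < r + ε. -/
open Set

/-- The closure operator `c_r` on a metric space: all points within distance `r` of `A`. -/
def cr {X : Type*} [MetricSpace X] (r : ℝ) (A : Set X) : Set X :=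
  {x | EMetric.infEdist x A ≤ ENNReal.ofReal r}

/-! Both directions rest on reading `x ∈ c_r A` as: for every `ε > 0` some point of `A` lies
within `r + ε` of `x`. For the forward direction, apply the closure condition to the set of points
whose images are at distance at least `r + ε` from `f x`. -/

theorem ENNReal.le_ofReal_iff_forall_lt_ofReal_add {a : ENNReal} {r : ℝ} (hr : 0 ≤ r) :
    a ≤ ENNReal.ofReal r ↔ ∀ ε > 0, a < ENNReal.ofReal (r + ε) := by
  refine ⟨fun h ε hε => h.trans_lt ((ENNReal.ofReal_lt_ofReal_iff (by linarith)).2 (by linarith)),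
    fun h => ENNReal.le_of_forall_pos_le_add fun ε hε _ => ?_⟩
  calc a ≤ ENNReal.ofReal (r + ε) := (h ε (by exact_mod_cast hε)).le
    _ = ENNReal.ofReal r + ε := by rw [ENNReal.ofReal_add hr ε.coe_nonneg, ENNReal.ofReal_coe_nnreal]

theorem mem_cr_iff {X : Type*} [MetricSpace X] {r : ℝ} (hr : 0 ≤ r) {A : Set X} {x : X} :
    x ∈ cr r A ↔ ∀ ε > 0, ∃ a ∈ A, dist x a < r + ε := by
  refine (ENNReal.le_ofReal_iff_forall_lt_ofReal_add hr).trans (forall₂_congr fun ε hε => ?_)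
  refine Metric.infEDist_lt_iff.trans ?_
  simp only [edist_dist, ENNReal.ofReal_lt_ofReal_iff (by linarith : 0 < r + ε)]

theorem continuous_iff_qr_continuous {X Y : Type*} [MetricSpace X] [MetricSpace Y]
    (q r : ℝ) (hq : 0 ≤ q) (hr : 0 ≤ r) (f : X → Y) :
    (∀ A : Set X, f '' cr q A ⊆ cr r (f '' A)) ↔
    (∀ x : X, ∀ ε > 0, ∃ δ > 0, ∀ x' : X,
      dist x x' < q + δ → dist (f x) (f x') < r + ε) := by
  constructor
  · intro h x ε hε
    by_contra! hfar
    have hx : x ∈ cr q {x' | r + ε ≤ dist (f x) (f x')} := (mem_cr_iff hq).2 fun δ hδ =>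
      let ⟨x', hxx', hfar'⟩ := hfar δ hδ; ⟨x', hfar', hxx'⟩
    obtain ⟨_, ⟨a, ha, rfl⟩, hfa⟩ := (mem_cr_iff hr).1 (h _ ⟨x, hx, rfl⟩) ε hε
    exact (not_lt.2 ha) hfa
  · rintro h A _ ⟨x, hx, rfl⟩
    refine (mem_cr_iff hr).2 fun ε hε => ?_
    obtain ⟨δ, hδ, hδf⟩ := h x ε hε
    obtain ⟨a, ha, hxa⟩ := (mem_cr_iff hq).1 hx δ hδ
    exact ⟨f a, mem_image_of_mem f ha, hδf a hxa⟩
end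

section
/- Let X, Y, Z be metric spaces and q, r, s, t ≥ 0 real numbers with r ≤ s. If f : X → Y is (q,r)-continuous and g : Y → Z is (s,t)-continuous, then g ∘ f : X → Z is (q,t)-continuous. -/
/-- `(q,r)`-continuity of a map between metric spaces. -/
def QRContinuous {X Y : Type*} [MetricSpace X] [MetricSpace Y] (q r : ℝ) (f : X → Y) : Prop :=
  ∀ x : X, ∀ ε > 0, ∃ δ > 0, ∀ x' : X, dist x x' < q + δ → dist (f x) (f x') < r + ε

theorem qr_continuous_comp_general {X Y Z : Type*} [MetricSpace X] [MetricSpace Y] [MetricSpace Z]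
    (q r s t : ℝ) (hrs : r ≤ s)
    (f : X → Y) (g : Y → Z)
    (hf : QRContinuous q r f) (hg : QRContinuous s t g) :
    QRContinuous q t (g ∘ f) := by
  intro x ε hε
  obtain ⟨η, hη, hg_near⟩ := hg (f x) ε hε
  -- The slack `s - r ≥ 0` lets `f`'s tolerance `r + (s - r + η)` land exactly on `g`'s window `s + η`.
  obtain ⟨δ, hδ, hf_near⟩ := hf x (s - r + η) (by linarith)
  refine ⟨δ, hδ, fun x' hx' => hg_near (f x') ?_⟩
  calc dist (f x) (f x') < r + (s - r + η) := hf_near x' hx'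
    _ = s + η := by ring

theorem qr_continuous_comp {X Y Z : Type*} [MetricSpace X] [MetricSpace Y] [MetricSpace Z]
    (q r s t : ℝ) (hq : 0 ≤ q) (hr : 0 ≤ r) (hs : 0 ≤ s) (ht : 0 ≤ t) (hrs : r ≤ s)
    (f : X → Y) (g : Y → Z)
    (hf : QRContinuous q r f) (hg : QRContinuous s t g) :
    QRContinuous q t (g ∘ f) :=
  qr_continuous_comp_general q r s t hrs f g hf hg
end

section
/- Let X be a compact topological space, let c be a Čech closure operator on a set Y, and let 𝒞 be an interior cover of (Y, c), i.e. for every y ∈ Y there exists V ∈ 𝒞 with y ∉ c (univ \ V). Suppose f : X → Y is continuous, i.e. f '' (closure A) ⊆ c (f '' A) for every A ⊆ X (closure denoting topological closure in X). Then there exists a finite open cover 𝒰 of X such that for every U ∈ 𝒰 there exists V ∈ 𝒞 with f '' U ⊆ V. -/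
/-!
Each point `x` has a neighbourhood `V ∈ 𝒞` of `f x`, and continuity of `f` makes the complement of
`closure (f ⁻¹' Vᶜ)` an open neighbourhood of `x` that `f` maps into `V`. Compactness of `X` then
extracts a finite subcover.
-/

open Set

/-- A Čech closure operator on a set `Y`. -/
def IsCechClosure {Y : Type*} (c : Set Y → Set Y) : Prop :=
  c ∅ = ∅ ∧ (∀ A : Set Y, A ⊆ c A) ∧ ∀ A B : Set Y, c (A ∪ B) = c A ∪ c B

theorem monotone_of_map_union {Y : Type*} {c : Set Y → Set Y}
    (hc : ∀ A B : Set Y, c (A ∪ B) = c A ∪ c B) : Monotone c := by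
  intro A B hAB
  calc c A ⊆ c A ∪ c B := subset_union_left
    _ = c B := by rw [← hc, union_eq_self_of_subset_left hAB]

theorem CompactSpace.exists_finset_isOpen_cover {X : Type*} [TopologicalSpace X] [CompactSpace X]
    {P : Set X → Prop} (h : ∀ x, ∃ U, IsOpen U ∧ x ∈ U ∧ P U) :
    ∃ 𝒰 : Finset (Set X), (∀ U ∈ 𝒰, IsOpen U) ∧ (⋃ U ∈ 𝒰, U) = univ ∧ ∀ U ∈ 𝒰, P U := by
  classical
  choose U hUopen hxU hPU using h
  obtain ⟨t, -, ht⟩ := isCompact_univ.elim_nhds_subcover U fun x _ => (hUopen x).mem_nhds (hxU x)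
  refine ⟨t.image U, by simpa using fun x _ => hUopen x, ?_, by simpa using fun x _ => hPU x⟩
  rw [Finset.set_biUnion_finset_image]
  exact eq_univ_of_univ_subset ht

theorem exists_isOpen_mem_image_subset {X Y : Type*} [TopologicalSpace X]
    {c : Set Y → Set Y} (hmono : Monotone c) {f : X → Y}
    (hf : ∀ A : Set X, f '' closure A ⊆ c (f '' A)) {x : X} {V : Set Y} (hx : f x ∉ c Vᶜ) :
    ∃ U, IsOpen U ∧ x ∈ U ∧ f '' U ⊆ V := by
  refine ⟨(closure (f ⁻¹' Vᶜ))ᶜ, isClosed_closure.isOpen_compl, fun hxc => hx ?_, ?_⟩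
  · exact hmono (image_preimage_subset f _) (hf _ (mem_image_of_mem f hxc))
  · rw [image_subset_iff, ← compl_subset_compl, compl_compl]
    exact subset_closure

theorem lebesgue_lemma {X Y : Type*} [TopologicalSpace X] [CompactSpace X]
    (c : Set Y → Set Y) (hc : IsCechClosure c)
    (𝒞 : Set (Set Y)) (hcov : ∀ y : Y, ∃ V ∈ 𝒞, y ∉ c (univ \ V))
    (f : X → Y) (hf : ∀ A : Set X, f '' closure A ⊆ c (f '' A)) :
    ∃ 𝒰 : Finset (Set X),
      (∀ U ∈ 𝒰, IsOpen U) ∧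
      (⋃ U ∈ 𝒰, U) = univ ∧
      ∀ U ∈ 𝒰, ∃ V ∈ 𝒞, f '' U ⊆ V := by
  refine CompactSpace.exists_finset_isOpen_cover fun x => ?_
  obtain ⟨V, hV𝒞, hxV⟩ := hcov (f x)
  rw [← compl_eq_univ_sdiff] at hxV
  obtain ⟨U, hU, hxU, hUV⟩ := exists_isOpen_mem_image_subset (monotone_of_map_union hc.2.2) hf hxV
  exact ⟨U, hU, hxU, V, hV𝒞, hUV⟩
end

section
/- Let c be a Čech closure operator on a set Y and let f, g : unitInterval → Y be continuous maps (i.e. f '' (closure A) ⊆ c (f '' A) and g '' (closure A) ⊆ c (g '' A) for every A ⊆ unitInterval, closure taken in the standard topology of the unit interval) with f 1 = g 0. Then the concatenation f ⋆ g : unitInterval → Y, defined by (f ⋆ g) t = f (2t) for t ≤ 1/2 and (f ⋆ g) t = g (2t − 1) for t > 1/2, is continuous: (f ⋆ g) '' (closure A) ⊆ c ((f ⋆ g) '' A) for every A ⊆ unitInterval. -/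
open Set unitInterval

/-- The concatenation `f ⋆ g` of two paths in a closure space. -/
noncomputable def pathConcat {Y : Type*} (f g : unitInterval → Y) : unitInterval → Y :=
  fun t =>
    if h : (t : ℝ) ≤ 1 / 2 then
      f ⟨2 * (t : ℝ), by constructor <;> [linarith [t.2.1]; linarith]⟩
    else
      g ⟨2 * (t : ℝ) - 1, by constructor <;> [linarith [not_le.mp h]; linarith [t.2.2]]⟩

/-! Each half of `f ⋆ g` is a path composed with a continuous reparametrization of `I`, and
the two halves are closed sets covering `I`. So it suffices that continuity into a closure space
is stable under precomposition with continuous maps, and that it can be pasted along a cover by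
two closed sets; the latter only needs `c` to be monotone, which follows from additivity. -/

theorem IsCechClosure.monotone {Y : Type*} {c : Set Y → Set Y} (hc : IsCechClosure c) :
    Monotone c := fun S T hST => by
  rw [← union_eq_right.mpr hST, hc.2.2]
  exact subset_union_left

def ClosureContinuous {X Y : Type*} [TopologicalSpace X] (c : Set Y → Set Y) (f : X → Y) :
    Prop :=
  ∀ A : Set X, f '' closure A ⊆ c (f '' A)

namespace ClosureContinuous

variable {X X' Y : Type*} [TopologicalSpace X] [TopologicalSpace X'] {c : Set Y → Set Y}

theorem comp_continuous {f : X → Y} (hf : ClosureContinuous c f) {φ : X' → X}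
    (hφ : Continuous φ) : ClosureContinuous c (f ∘ φ) := fun A => by
  rw [image_comp, image_comp]
  exact (image_mono (image_closure_subset_closure_image hφ)).trans (hf _)

theorem image_closure_inter_subset (hc : Monotone c) {h u : X → Y} (hu : ClosureContinuous c u)
    {F : Set X} (hF : IsClosed F) (huF : EqOn h u F) (A : Set X) :
    h '' closure (A ∩ F) ⊆ c (h '' A) :=
  calc h '' closure (A ∩ F) = u '' closure (A ∩ F) :=
        (huF.mono (closure_minimal inter_subset_right hF)).image_eq
    _ ⊆ c (u '' (A ∩ F)) := hu _
    _ = c (h '' (A ∩ F)) := by rw [(huF.mono inter_subset_right).image_eq]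
    _ ⊆ c (h '' A) := hc (image_mono inter_subset_left)

theorem of_eqOn_isClosed (hc : Monotone c) {h u v : X → Y} (hu : ClosureContinuous c u)
    (hv : ClosureContinuous c v) {F G : Set X} (hF : IsClosed F) (hG : IsClosed G)
    (hFG : F ∪ G = univ) (huF : EqOn h u F) (hvG : EqOn h v G) : ClosureContinuous c h :=
  fun A => by
    conv_lhs => rw [← inter_univ A, ← hFG, inter_union_distrib_left, closure_union, image_union]
    exact union_subset (image_closure_inter_subset hc hu hF huF A)
      (image_closure_inter_subset hc hv hG hvG A)

end ClosureContinuous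

section pathConcat

variable {Y : Type*}

noncomputable def firstHalfReparam (t : I) : I := projIcc 0 1 zero_le_one (2 * t)

noncomputable def secondHalfReparam (t : I) : I := projIcc 0 1 zero_le_one (2 * t - 1)

theorem continuous_firstHalfReparam : Continuous firstHalfReparam :=
  continuous_projIcc.comp (by fun_prop)

theorem continuous_secondHalfReparam : Continuous secondHalfReparam :=
  continuous_projIcc.comp (by fun_prop)

theorem pathConcat_eqOn_firstHalf (f g : I → Y) :
    EqOn (pathConcat f g) (f ∘ firstHalfReparam) {t | (t : ℝ) ≤ 1 / 2} := fun t ht => by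
  have ht : (t : ℝ) ≤ 1 / 2 := ht
  have h2t : 2 * (t : ℝ) ∈ Icc 0 1 := ⟨by linarith [t.2.1], by linarith⟩
  rw [pathConcat, dif_pos ht, Function.comp_apply, firstHalfReparam, projIcc_of_mem _ h2t]

theorem pathConcat_eqOn_secondHalf {f g : I → Y} (hfg : f 1 = g 0) :
    EqOn (pathConcat f g) (g ∘ secondHalfReparam) {t | 1 / 2 ≤ (t : ℝ)} := fun t ht => by
  have ht : 1 / 2 ≤ (t : ℝ) := ht
  rw [pathConcat, Function.comp_apply, secondHalfReparam]
  split_ifs with hle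
  · have hhalf : 2 * (t : ℝ) = 1 := by linarith
    simp only [hhalf, sub_self, projIcc_left]
    exact hfg
  · have h2t : 2 * (t : ℝ) - 1 ∈ Icc 0 1 := ⟨by linarith, by linarith [t.2.2]⟩
    rw [projIcc_of_mem _ h2t]

end pathConcat

theorem pathConcat_continuous {Y : Type*} (c : Set Y → Set Y) (hc : IsCechClosure c)
    (f g : unitInterval → Y)
    (hf : ∀ A : Set unitInterval, f '' closure A ⊆ c (f '' A))
    (hg : ∀ A : Set unitInterval, g '' closure A ⊆ c (g '' A))
    (hfg : f 1 = g 0) :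
    ∀ A : Set unitInterval, (pathConcat f g) '' closure A ⊆ c ((pathConcat f g) '' A) :=
  ClosureContinuous.of_eqOn_isClosed hc.monotone
    (ClosureContinuous.comp_continuous hf continuous_firstHalfReparam)
    (ClosureContinuous.comp_continuous hg continuous_secondHalfReparam)
    (isClosed_le continuous_subtype_val continuous_const)
    (isClosed_le continuous_const continuous_subtype_val)
    (by ext t; simp [le_total]) (pathConcat_eqOn_firstHalf f g) (pathConcat_eqOn_secondHalf hfg)
end

section
/- Let c be a Čech closure operator on a set Y and let f : unitInterval → Y be a continuous path (f '' (closure A) ⊆ c (f '' A) for every A ⊆ unitInterval). Let e : unitInterval → Y be the constant path e t = f 0. Then e ⋆ f is homotopic to f rel ∂I: there exists a map H : unitInterval × unitInterval → Y, continuous from the product topology (H '' (closure A) ⊆ c (H '' A) for every A ⊆ unitInterval × unitInterval), such that H (s, 0) = (e ⋆ f) s and H (s, 1) = f s for all s, and H (0, t) = f 0 and H (1, t) = f 1 for all t. -/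
open Set unitInterval

/-- The homotopy is `f ∘ homotopyReparam`: at time `t` the first `(1 - t) / 2` of the
interval stays at `0` and the rest runs linearly through `I`, so at `t = 0` this is the
reparametrization of `e ⋆ f` and at `t = 1` the identity. -/
noncomputable def homotopyReparam (p : I × I) : I :=
  projIcc 0 1 zero_le_one ((2 * (p.1 : ℝ) - 1 + p.2) / (1 + p.2))

theorem continuous_homotopyReparam : Continuous homotopyReparam := by
  refine continuous_projIcc.comp (Continuous.div (by fun_prop) (by fun_prop) fun p => ?_)
  linarith [p.2.2.1]

theorem homotopyReparam_zero_right (s : I) :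
    homotopyReparam (s, 0) = projIcc 0 1 zero_le_one (2 * (s : ℝ) - 1) := by
  simp [homotopyReparam]

theorem homotopyReparam_one_right (s : I) : homotopyReparam (s, 1) = s := by
  have h : (2 * (s : ℝ) - 1 + 1) / (1 + 1) = s := by ring
  simp only [homotopyReparam, Icc.coe_one, h, projIcc_val]

theorem homotopyReparam_zero_left (t : I) : homotopyReparam (0, t) = 0 := by
  refine projIcc_of_le_left _ ?_
  rw [Icc.coe_zero, div_le_iff₀ (by linarith [t.2.1])]
  linarith [t.2.2]

theorem homotopyReparam_one_left (t : I) : homotopyReparam (1, t) = 1 := by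
  refine projIcc_of_right_le _ ?_
  rw [Icc.coe_one, le_div_iff₀ (by linarith [t.2.1])]
  linarith

theorem image_closure_subset_of_comp_continuous {X Z Y : Type*} [TopologicalSpace X]
    [TopologicalSpace Z] {c : Set Y → Set Y} {f : Z → Y}
    (hf : ∀ A : Set Z, f '' closure A ⊆ c (f '' A)) {g : X → Z} (hg : Continuous g)
    (A : Set X) : (f ∘ g) '' closure A ⊆ c ((f ∘ g) '' A) := by
  rw [image_comp, image_comp]
  exact (image_mono (image_closure_subset_closure_image hg)).trans (hf _)

theorem pathConcat_const_eq_comp_projIcc {Y : Type*} (f : I → Y) (s : I) :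
    pathConcat (fun _ => f 0) f s = f (projIcc 0 1 zero_le_one (2 * (s : ℝ) - 1)) := by
  unfold pathConcat
  split_ifs with hs
  · rw [projIcc_of_le_left _ (by linarith)]
    rfl
  · congr 1
    rw [projIcc_of_mem _ ⟨by linarith, by linarith [s.2.2]⟩]

theorem const_concat_homotopic_general {Y : Type*} (c : Set Y → Set Y)
    (f : unitInterval → Y)
    (hf : ∀ A : Set unitInterval, f '' closure A ⊆ c (f '' A)) :
    ∃ H : unitInterval × unitInterval → Y,
      (∀ A : Set (unitInterval × unitInterval), H '' closure A ⊆ c (H '' A)) ∧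
      (∀ s : unitInterval, H (s, 0) = pathConcat (fun _ => f 0) f s) ∧
      (∀ s : unitInterval, H (s, 1) = f s) ∧
      (∀ t : unitInterval, H (0, t) = f 0) ∧
      (∀ t : unitInterval, H (1, t) = f 1) := by
  refine ⟨f ∘ homotopyReparam,
    image_closure_subset_of_comp_continuous hf continuous_homotopyReparam, fun s => ?_,
    fun s => ?_, fun t => ?_, fun t => ?_⟩
  · rw [pathConcat_const_eq_comp_projIcc, Function.comp_apply, homotopyReparam_zero_right]
  · rw [Function.comp_apply, homotopyReparam_one_right]
  · rw [Function.comp_apply, homotopyReparam_zero_left]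
  · rw [Function.comp_apply, homotopyReparam_one_left]

theorem const_concat_homotopic {Y : Type*} (c : Set Y → Set Y) (hc : IsCechClosure c)
    (f : unitInterval → Y)
    (hf : ∀ A : Set unitInterval, f '' closure A ⊆ c (f '' A)) :
    ∃ H : unitInterval × unitInterval → Y,
      (∀ A : Set (unitInterval × unitInterval), H '' closure A ⊆ c (H '' A)) ∧
      (∀ s : unitInterval, H (s, 0) = pathConcat (fun _ => f 0) f s) ∧
      (∀ s : unitInterval, H (s, 1) = f s) ∧
      (∀ t : unitInterval, H (0, t) = f 0) ∧
      (∀ t : unitInterval, H (1, t) = f 1) :=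
  const_concat_homotopic_general c f hf
end

section
/- Let c be a Čech closure operator on a set Y and let f : unitInterval → Y be a continuous path (f '' (closure A) ⊆ c (f '' A) for every A ⊆ unitInterval). Let g : unitInterval → Y be the reverse path g t = f (1 − t). Then f ⋆ g is null-homotopic rel ∂I: there exists a map H : unitInterval × unitInterval → Y, continuous from the product topology (H '' (closure A) ⊆ c (H '' A) for every A ⊆ unitInterval × unitInterval), such that H (s, 0) = (f ⋆ g) s for all s, H (s, 1) = f 0 for all s, and H (0, t) = f 0 and H (1, t) = f 0 for all t. -/
open Set unitInterval

open Path.Homotopy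

/-!
Contract `f ⋆ f⁻` through the reparametrizations `s ↦ (1 - t) · min (2s, 2 - 2s)` of `f`: each
stage runs along `f` up to time `1 - t` and back. Precomposing a closure-continuous map with a
continuous map of topological spaces keeps it closure-continuous, since continuous maps send
closures into closures.
-/

theorem image_closure_comp_subset {X Z Y : Type*} [TopologicalSpace X] [TopologicalSpace Z]
    (c : Set Y → Set Y) {f : Z → Y} (hf : ∀ A : Set Z, f '' closure A ⊆ c (f '' A))
    {φ : X → Z} (hφ : Continuous φ) (A : Set X) :
    (f ∘ φ) '' closure A ⊆ c ((f ∘ φ) '' A) :=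
  calc (f ∘ φ) '' closure A = f '' (φ '' closure A) := image_comp f φ _
    _ ⊆ f '' closure (φ '' A) := image_mono (image_closure_subset_closure_image hφ)
    _ ⊆ c (f '' (φ '' A)) := hf _
    _ = c ((f ∘ φ) '' A) := by rw [image_comp]

noncomputable def concatReverseTime (p : I × I) : I :=
  ⟨reflTransSymmAux (σ p.2, p.1), reflTransSymmAux_mem_I _⟩

theorem continuous_concatReverseTime : Continuous concatReverseTime :=
  continuous_reflTransSymmAux.comp (by fun_prop) |>.subtype_mk _

theorem pathConcat_reverse_apply {Y : Type*} (f : I → Y) (s : I) :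
    pathConcat f (fun t => f (σ t)) s = f (concatReverseTime (s, 0)) := by
  unfold pathConcat concatReverseTime reflTransSymmAux
  dsimp only
  split_ifs <;> congr 1 <;> ext <;> simp only [coe_symm_eq, Icc.coe_zero] <;> ring

@[simp]
theorem concatReverseTime_one_right (s : I) : concatReverseTime (s, 1) = 0 := by
  ext; simp [concatReverseTime, reflTransSymmAux]

@[simp]
theorem concatReverseTime_zero_left (t : I) : concatReverseTime (0, t) = 0 := by
  ext; simp [concatReverseTime, reflTransSymmAux]

@[simp]
theorem concatReverseTime_one_left (t : I) : concatReverseTime (1, t) = 0 := by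
  ext; norm_num [concatReverseTime, reflTransSymmAux]

theorem concat_reverse_nullhomotopic_general {Y : Type*} (c : Set Y → Set Y)
    (f : unitInterval → Y)
    (hf : ∀ A : Set unitInterval, f '' closure A ⊆ c (f '' A)) :
    ∃ H : unitInterval × unitInterval → Y,
      (∀ A : Set (unitInterval × unitInterval), H '' closure A ⊆ c (H '' A)) ∧
      (∀ s : unitInterval, H (s, 0) = pathConcat f (fun t => f (unitInterval.symm t)) s) ∧
      (∀ s : unitInterval, H (s, 1) = f 0) ∧
      (∀ t : unitInterval, H (0, t) = f 0) ∧
      (∀ t : unitInterval, H (1, t) = f 0) :=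
  ⟨f ∘ concatReverseTime, image_closure_comp_subset c hf continuous_concatReverseTime,
    fun s => (pathConcat_reverse_apply f s).symm, by simp, by simp, by simp⟩

theorem concat_reverse_nullhomotopic {Y : Type*} (c : Set Y → Set Y) (hc : IsCechClosure c)
    (f : unitInterval → Y)
    (hf : ∀ A : Set unitInterval, f '' closure A ⊆ c (f '' A)) :
    ∃ H : unitInterval × unitInterval → Y,
      (∀ A : Set (unitInterval × unitInterval), H '' closure A ⊆ c (H '' A)) ∧
      (∀ s : unitInterval, H (s, 0) = pathConcat f (fun t => f (unitInterval.symm t)) s) ∧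
      (∀ s : unitInterval, H (s, 1) = f 0) ∧
      (∀ t : unitInterval, H (0, t) = f 0) ∧
      (∀ t : unitInterval, H (1, t) = f 0) :=
  concat_reverse_nullhomotopic_general c f hf
end

section
/- Let f : ℝ → ℝ be defined by f x = (2/π) · arctan x. Then for all real numbers x, x', a with |x| < |x'| and 0 < a, one has f (x' + a) − f (x' − a) < f (x + a) − f (x − a). -/
/-! The increment `g t = arctan (t + a) - arctan (t - a)` of `arctan` over a window of half-width
`a` centred at `t` is even in `t`, and for `t > 0` its derivative
`1 / (1 + (t + a)²) - 1 / (1 + (t - a)²)` is negative because `|t + a| > |t - a|`.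
So `g` is strictly decreasing in `|t|`. -/

open Real Set

lemma arctan_add_sub_arctan_sub_neg (a t : ℝ) :
    arctan (-t + a) - arctan (-t - a) = arctan (t + a) - arctan (t - a) := by
  rw [show -t + a = -(t - a) by ring, show -t - a = -(t + a) by ring, arctan_neg, arctan_neg]
  ring

lemma arctan_add_sub_arctan_sub_abs (a t : ℝ) :
    arctan (|t| + a) - arctan (|t| - a) = arctan (t + a) - arctan (t - a) := by
  rcases abs_choice t with h | h <;> rw [h]
  exact arctan_add_sub_arctan_sub_neg a t

lemma hasDerivAt_arctan_add_sub_arctan_sub (a t : ℝ) :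
    HasDerivAt (fun s => arctan (s + a) - arctan (s - a))
      (1 / (1 + (t + a) ^ 2) - 1 / (1 + (t - a) ^ 2)) t := by
  have hplus := ((hasDerivAt_id t).add_const a).arctan
  have hminus := ((hasDerivAt_id t).sub_const a).arctan
  simp only [id, mul_one] at hplus hminus
  exact hplus.sub hminus

lemma strictAntiOn_arctan_add_sub_arctan_sub {a : ℝ} (ha : 0 < a) :
    StrictAntiOn (fun t => arctan (t + a) - arctan (t - a)) (Ici 0) := by
  refine strictAntiOn_of_deriv_neg (convex_Ici 0)
    (fun t _ => (hasDerivAt_arctan_add_sub_arctan_sub a t).continuousAt.continuousWithinAt) ?_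
  intro t ht
  rw [interior_Ici, mem_Ioi] at ht
  rw [(hasDerivAt_arctan_add_sub_arctan_sub a t).deriv, sub_neg]
  exact one_div_lt_one_div_of_lt (by positivity) (by nlinarith)

lemma arctan_add_sub_arctan_sub_lt_of_abs_lt {x x' a : ℝ} (h : |x| < |x'|) (ha : 0 < a) :
    arctan (x' + a) - arctan (x' - a) < arctan (x + a) - arctan (x - a) := by
  rw [← arctan_add_sub_arctan_sub_abs a x, ← arctan_add_sub_arctan_sub_abs a x']
  exact strictAntiOn_arctan_add_sub_arctan_sub ha (abs_nonneg x) ((abs_nonneg x).trans h.le) h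

theorem arctan_interval_shrinks (x x' a : ℝ) (h : |x| < |x'|) (ha : 0 < a) :
    (2 / Real.pi) * Real.arctan (x' + a) - (2 / Real.pi) * Real.arctan (x' - a) <
      (2 / Real.pi) * Real.arctan (x + a) - (2 / Real.pi) * Real.arctan (x - a) := by
  simp only [← mul_sub]
  exact mul_lt_mul_of_pos_left (arctan_add_sub_arctan_sub_lt_of_abs_lt h ha) (by positivity)
end

section
/- Let r ≥ 0 be a real number. Define c_r : Set ℝ → Set ℝ by c_r A = {x | EMetric.infEdist x A ≤ ENNReal.ofReal r}, and define the product closure membership predicate on ℝ × unitInterval by: p ∈ cΠ A if and only if for every δ > 0 there exists (y, s) ∈ A with |p.1 − y| < r + δ and |(p.2 : ℝ) − (s : ℝ)| < δ. Then the closure space (ℝ, c_r) is contractible: there exists a map H : ℝ × unitInterval → ℝ such that H (x, 0) = x for all x ∈ ℝ, H (x, 1) = 0 for all x ∈ ℝ, and H is continuous, i.e. for every A ⊆ ℝ × unitInterval and every p, if p ∈ cΠ A then H p ∈ c_r (H '' A). -/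
open Set

/-- The closure operator `c_r` on `ℝ`. -/
def crR (r : ℝ) (A : Set ℝ) : Set ℝ :=
  {x | EMetric.infEdist x A ≤ ENNReal.ofReal r}

/-- Membership in the product closure of `(ℝ, c_r)` with the topological unit interval. -/
def cPi (r : ℝ) (A : Set (ℝ × unitInterval)) : Set (ℝ × unitInterval) :=
  {p | ∀ δ > 0, ∃ q ∈ A, |p.1 - q.1| < r + δ ∧ |(p.2 : ℝ) - (q.2 : ℝ)| < δ}

/-! The straight-line homotopy `H (x, t) = (1 - t) x` contracts `ℝ` to `0`. It is continuous for
`c_r` because `|H (x, t) - H (y, s)| ≤ |x - y| + |t - s| (|x| + |x - y|)`: a point of the product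
closure lies within `r + δ` in the first and `δ` in the second coordinate of some point of `A`, so
its image lies within `r + O(δ)` of `H '' A`, for every `δ > 0`. -/

lemma Metric.infEDist_le_ofReal_of_forall_dist_lt {α : Type*} [PseudoMetricSpace α] {x : α}
    {s : Set α} {r : ℝ} (h : ∀ ε > 0, ∃ y ∈ s, dist x y < r + ε) :
    Metric.infEDist x s ≤ ENNReal.ofReal r := by
  refine ENNReal.le_of_forall_pos_le_add fun ε hε _ => ?_
  obtain ⟨y, hy, hxy⟩ := h ε hε
  calc Metric.infEDist x s ≤ edist x y := Metric.infEDist_le_edist_of_mem hy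
    _ = ENNReal.ofReal (dist x y) := edist_dist x y
    _ ≤ ENNReal.ofReal (r + ε) := ENNReal.ofReal_le_ofReal hxy.le
    _ ≤ ENNReal.ofReal r + ENNReal.ofReal ε := ENNReal.ofReal_add_le
    _ = ENNReal.ofReal r + ε := by rw [ENNReal.ofReal_coe_nnreal]

lemma norm_one_sub_smul_sub_one_sub_smul_le {E : Type*} [SeminormedAddCommGroup E]
    [NormedSpace ℝ E] {t : ℝ} (ht : t ∈ unitInterval) (s : ℝ) (x y : E) :
    ‖(1 - t) • x - (1 - s) • y‖ ≤ ‖x - y‖ + |t - s| * (‖x‖ + ‖x - y‖) := by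
  have h1t : |1 - t| ≤ 1 := abs_le.2 ⟨by linarith [ht.2], by linarith [ht.1]⟩
  calc ‖(1 - t) • x - (1 - s) • y‖ = ‖(1 - t) • (x - y) + (s - t) • y‖ := by
        congr 1; simp only [smul_sub, sub_smul, one_smul]; abel
    _ ≤ |1 - t| * ‖x - y‖ + |s - t| * ‖y‖ := by
        simpa only [norm_smul, Real.norm_eq_abs] using
          norm_add_le ((1 - t) • (x - y)) ((s - t) • y)
    _ ≤ 1 * ‖x - y‖ + |t - s| * (‖x‖ + ‖x - y‖) := by
        rw [abs_sub_comm s t]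
        gcongr
        exact norm_le_norm_add_norm_sub (E := E) x y
    _ = ‖x - y‖ + |t - s| * (‖x‖ + ‖x - y‖) := by rw [one_mul]

def lineContraction (p : ℝ × unitInterval) : ℝ := (1 - (p.2 : ℝ)) * p.1

lemma exists_abs_lineContraction_sub_lt_of_mem_cPi {r : ℝ} {A : Set (ℝ × unitInterval)}
    {p : ℝ × unitInterval} (hp : p ∈ cPi r A) {ε : ℝ} (hε : 0 < ε) :
    ∃ q ∈ A, |lineContraction p - lineContraction q| < r + ε := by
  set K := |p.1| + |r| + 2
  have hK : 0 < K := by positivity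
  set δ := min 1 (ε / K)
  have hδ : 0 < δ := lt_min one_pos (div_pos hε hK)
  have hδK : δ * K ≤ ε := (le_div_iff₀ hK).1 (min_le_right _ _)
  obtain ⟨q, hqA, hxy, hts⟩ := hp δ hδ
  refine ⟨q, hqA, ?_⟩
  have hbound : |p.1| + |p.1 - q.1| ≤ |p.1| + |r| + 1 := by
    linarith [le_abs_self r, min_le_left 1 (ε / K)]
  calc |lineContraction p - lineContraction q|
      ≤ |p.1 - q.1| + |(p.2 : ℝ) - q.2| * (|p.1| + |p.1 - q.1|) := by
        simpa only [lineContraction, smul_eq_mul, Real.norm_eq_abs] using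
          norm_one_sub_smul_sub_one_sub_smul_le p.2.2 (q.2 : ℝ) p.1 q.1
    _ < (r + δ) + δ * (|p.1| + |r| + 1) := by
        have hmul : |(p.2 : ℝ) - q.2| * (|p.1| + |p.1 - q.1|) < δ * (|p.1| + |r| + 1) :=
          (mul_le_mul_of_nonneg_left hbound (abs_nonneg _)).trans_lt
            (mul_lt_mul_of_pos_right hts (by positivity))
        linarith
    _ = r + δ * K := by ring
    _ ≤ r + ε := by linarith

theorem R_cr_contractible_general (r : ℝ) :
    ∃ H : ℝ × unitInterval → ℝ,
      (∀ x : ℝ, H (x, 0) = x) ∧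
      (∀ x : ℝ, H (x, 1) = 0) ∧
      ∀ (A : Set (ℝ × unitInterval)) (p : ℝ × unitInterval),
        p ∈ cPi r A → H p ∈ crR r (H '' A) := by
  refine ⟨lineContraction, fun x => by simp [lineContraction],
    fun x => by simp [lineContraction], fun A p hp => ?_⟩
  refine Metric.infEDist_le_ofReal_of_forall_dist_lt fun ε hε => ?_
  simpa only [exists_mem_image, Real.dist_eq] using
    exists_abs_lineContraction_sub_lt_of_mem_cPi hp hε

theorem R_cr_contractible (r : ℝ) (hr : 0 ≤ r) :
    ∃ H : ℝ × unitInterval → ℝ,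
      (∀ x : ℝ, H (x, 0) = x) ∧
      (∀ x : ℝ, H (x, 1) = 0) ∧
      ∀ (A : Set (ℝ × unitInterval)) (p : ℝ × unitInterval),
        p ∈ cPi r A → H p ∈ crR r (H '' A) :=
  R_cr_contractible_general r
end

section
/- Let m ≥ 1 be a natural number. Define c_m : Set ℤ → Set ℤ by c_m A = {k | ∃ j ∈ A, |k − j| ≤ m}, and define the product closure membership predicate on ℤ × unitInterval by: p ∈ cΠ A if and only if for every δ > 0 there exists (j, s) ∈ A with |p.1 − j| ≤ m and |(p.2 : ℝ) − (s : ℝ)| < δ. Then the closure space (ℤ, c_m) is contractible: there exists a map H : ℤ × unitInterval → ℤ such that H (k, 0) = k for all k ∈ ℤ, H (k, 1) = 0 for all k ∈ ℤ, and H is continuous, i.e. for every A ⊆ ℤ × unitInterval and every p, if p ∈ cΠ A then H p ∈ c_m (H '' A). -/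
open Set

/-- The closure operator `c_m` on `ℤ`. -/
def cmZ (m : ℕ) (A : Set ℤ) : Set ℤ :=
  {k | ∃ j ∈ A, |k - j| ≤ (m : ℤ)}

/-- Membership in the product closure of `(ℤ, c_m)` with the topological unit interval. -/
def cPiZ (m : ℕ) (A : Set (ℤ × unitInterval)) : Set (ℤ × unitInterval) :=
  {p | ∀ δ > 0, ∃ q ∈ A, |p.1 - q.1| ≤ (m : ℤ) ∧ |(p.2 : ℝ) - (q.2 : ℝ)| < δ}

/-!
The contraction at time `t > 0` clamps `k` into `[-N t, N t]` with `N t = ⌊1/t⌋ - 1`, and is the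
identity at `t = 0`. Near a time `t > 0` the level `N` moves by at most `1 ≤ m`, and clamping is
`1`-Lipschitz in the level and in the point, so `c_m`-closeness is preserved. Near `t = 0` the
level is so large that clamping fixes every integer `c_m`-close to `k`.
-/

lemma Int.abs_floor_sub_floor_le_one {R : Type*} [Ring R] [LinearOrder R] [IsStrictOrderedRing R]
    [FloorRing R] {a b : R} (h : |a - b| < 1) : |⌊a⌋ - ⌊b⌋| ≤ 1 := by
  obtain ⟨h₁, h₂⟩ := abs_sub_lt_iff.mp h
  rw [sub_lt_iff_lt_add'] at h₁ h₂
  have hab : ⌊a⌋ ≤ ⌊b⌋ + 1 := by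
    rw [← Int.floor_add_one]; exact Int.floor_le_floor h₁.le
  have hba : ⌊b⌋ ≤ ⌊a⌋ + 1 := by
    rw [← Int.floor_add_one]; exact Int.floor_le_floor h₂.le
  rw [abs_le]; omega

def clampInt (M k : ℤ) : ℤ := max (-M) (min M k)

lemma abs_clampInt_sub_clampInt_le (M M' k j : ℤ) :
    |clampInt M k - clampInt M' j| ≤ max |M - M'| |k - j| := by
  calc |clampInt M k - clampInt M' j|
      ≤ max |-M - -M'| |min M k - min M' j| := abs_max_sub_max_le_max _ _ _ _
    _ ≤ max |M - M'| (max |M - M'| |k - j|) := by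
        rw [neg_sub_neg, abs_sub_comm]
        exact max_le_max le_rfl (abs_min_sub_min_le_max _ _ _ _)
    _ = max |M - M'| |k - j| := by simp

lemma clampInt_of_abs_le {M k : ℤ} (h : |k| ≤ M) : clampInt M k = k := by
  rw [abs_le] at h
  simp only [clampInt]
  omega

@[simp] lemma clampInt_zero (k : ℤ) : clampInt 0 k = 0 := by
  simp only [clampInt]
  omega

noncomputable def contraction (p : ℤ × unitInterval) : ℤ :=
  if (p.2 : ℝ) = 0 then p.1 else clampInt (⌊(p.2 : ℝ)⁻¹⌋ - 1) p.1

@[simp] lemma contraction_zero (k : ℤ) : contraction (k, 0) = k := by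
  simp [contraction]

@[simp] lemma contraction_one (k : ℤ) : contraction (k, 1) = 0 := by
  simp [contraction]

def CmContinuousAt (m : ℕ) (H : ℤ × unitInterval → ℤ) (p : ℤ × unitInterval) : Prop :=
  ∃ δ > 0, ∀ q : ℤ × unitInterval,
    |p.1 - q.1| ≤ (m : ℤ) → |(p.2 : ℝ) - (q.2 : ℝ)| < δ → |H p - H q| ≤ (m : ℤ)

lemma CmContinuousAt.mem_cmZ_image {m : ℕ} {H : ℤ × unitInterval → ℤ} {p : ℤ × unitInterval}
    (hH : CmContinuousAt m H p) {A : Set (ℤ × unitInterval)} (hp : p ∈ cPiZ m A) :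
    H p ∈ cmZ m (H '' A) := by
  obtain ⟨δ, hδ, hclose⟩ := hH
  obtain ⟨q, hqA, hq1, hq2⟩ := hp δ hδ
  exact ⟨H q, mem_image_of_mem H hqA, hclose q hq1 hq2⟩

lemma cmContinuousAt_contraction_of_eq_zero (m : ℕ) {p : ℤ × unitInterval} (hp : (p.2 : ℝ) = 0) :
    CmContinuousAt m contraction p := by
  obtain ⟨k, t⟩ := p
  dsimp only at hp
  have hN : (0 : ℝ) < ((|k| + m + 1 : ℤ) : ℝ) := by positivity
  refine ⟨((|k| + m + 1 : ℤ) : ℝ)⁻¹, inv_pos.mpr hN, ?_⟩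
  rintro ⟨j, s⟩ hkj hts
  dsimp only at hkj hts
  simp only [contraction, hp] at hts ⊢
  by_cases hs : (s : ℝ) = 0
  · simpa [hs] using hkj
  have hs_pos : 0 < (s : ℝ) := lt_of_le_of_ne s.2.1 (Ne.symm hs)
  rw [zero_sub, abs_neg, abs_of_pos hs_pos] at hts
  have hlevel : |k| + m + 1 ≤ ⌊(s : ℝ)⁻¹⌋ :=
    Int.le_floor.mpr ((lt_inv_comm₀ hs_pos hN).mp hts).le
  have hj : |j| ≤ ⌊(s : ℝ)⁻¹⌋ - 1 := by
    have := abs_sub_abs_le_abs_sub j k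
    rw [abs_sub_comm] at hkj
    omega
  rw [if_neg hs, clampInt_of_abs_le hj]
  exact hkj

lemma cmContinuousAt_contraction_of_pos {m : ℕ} (hm : 1 ≤ m) {p : ℤ × unitInterval}
    (hp : 0 < (p.2 : ℝ)) : CmContinuousAt m contraction p := by
  obtain ⟨k, t⟩ := p
  dsimp only at hp
  have hnear : ∀ᶠ s in nhds (t : ℝ), 0 < s ∧ |(t : ℝ)⁻¹ - s⁻¹| < 1 := by
    refine (eventually_gt_nhds hp).and ?_
    have := (continuousAt_inv₀ hp.ne').eventually (Metric.ball_mem_nhds _ one_pos)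
    filter_upwards [this] with s hs
    rwa [Real.dist_eq, abs_sub_comm] at hs
  obtain ⟨δ, hδ, hclose⟩ := Metric.eventually_nhds_iff.mp hnear
  refine ⟨δ, hδ, ?_⟩
  rintro ⟨j, s⟩ hkj hts
  dsimp only at hkj hts
  obtain ⟨hs_pos, hinv⟩ := hclose (by rwa [Real.dist_eq, abs_sub_comm])
  have hlevel : |(⌊(t : ℝ)⁻¹⌋ - 1) - (⌊(s : ℝ)⁻¹⌋ - 1)| ≤ 1 := by
    rw [sub_sub_sub_cancel_right]
    exact Int.abs_floor_sub_floor_le_one hinv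
  simp only [contraction, hp.ne', hs_pos.ne', if_false]
  exact (abs_clampInt_sub_clampInt_le _ _ _ _).trans (max_le (by omega) hkj)

lemma cmContinuousAt_contraction {m : ℕ} (hm : 1 ≤ m) (p : ℤ × unitInterval) :
    CmContinuousAt m contraction p := by
  rcases (p.2.2.1 : (0 : ℝ) ≤ p.2).eq_or_lt with hp | hp
  · exact cmContinuousAt_contraction_of_eq_zero m hp.symm
  · exact cmContinuousAt_contraction_of_pos hm hp

theorem Z_cm_contractible (m : ℕ) (hm : 1 ≤ m) :
    ∃ H : ℤ × unitInterval → ℤ,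
      (∀ k : ℤ, H (k, 0) = k) ∧
      (∀ k : ℤ, H (k, 1) = 0) ∧
      ∀ (A : Set (ℤ × unitInterval)) (p : ℤ × unitInterval),
        p ∈ cPiZ m A → H p ∈ cmZ m (H '' A) :=
  ⟨contraction, contraction_zero, contraction_one,
    fun _ p hp => (cmContinuousAt_contraction hm p).mem_cmZ_image hp⟩
end
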